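/- Let A ∈ ℝ^{m×n} be nonzero with singular values σ₁ > σ₂ ≥ ... ≥ σ_p ≥ 0 (strict gap between the two largest) and SVD A = U Σ Vᵀ with columns u₁,...,u_m of U and v₁,...,v_n of V. Then B = σ₁ u₁ v₁ᵀ is the UNIQUE minimizer of ‖A − B‖ over rank-one matrices B ∈ ℝ^{m×n}. -/

import Mathlib

open Matrix BigOperators

noncomputable section

/-- Squared Frobenius norm of a real matrix. -/
def frobSq {m n : Type*} [Fintype m] [Fintype n] (A : Matrix m n ℝ) : ℝ :=
  ∑ i, ∑ j, (A i j) ^ 2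

/-- A rank-one matrix: a nonzero outer product `c dᵀ`. -/
def rankOne {m n : Type*} [Fintype m] [Fintype n] (B : Matrix m n ℝ) : Prop :=
  B ≠ 0 ∧ ∃ (c : m → ℝ) (d : n → ℝ), B = Matrix.of fun i j => c i * d j

set_option maxHeartbeats 1000000

lemma frobSq_eq_trace {m n : Type*} [Fintype m] [Fintype n] (A : Matrix m n ℝ) :
    frobSq A = Matrix.trace (Aᵀ * A) := by
  unfold frobSq Matrix.trace
  simp only [Matrix.diag_apply, Matrix.mul_apply, Matrix.transpose_apply, sq]
  rw [Finset.sum_comm]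

lemma frobSq_conj {m n : Type*} [Fintype m] [Fintype n] [DecidableEq m] [DecidableEq n]
    (U : Matrix m m ℝ) (V : Matrix n n ℝ) (hU : Uᵀ * U = 1) (hV : Vᵀ * V = 1)
    (M : Matrix m n ℝ) : frobSq (Uᵀ * M * V) = frobSq M := by
  have hUU : U * Uᵀ = 1 := mul_eq_one_comm.mp hU
  have hVV : V * Vᵀ = 1 := mul_eq_one_comm.mp hV
  rw [frobSq_eq_trace, frobSq_eq_trace]
  have h1 : (Uᵀ * M * V)ᵀ * (Uᵀ * M * V) = Vᵀ * ((Mᵀ * M) * V) := by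
    simp only [Matrix.transpose_mul, Matrix.transpose_transpose]
    simp only [Matrix.mul_assoc]
    rw [← Matrix.mul_assoc U Uᵀ, hUU, Matrix.one_mul]
  rw [h1, Matrix.trace_mul_comm, Matrix.mul_assoc, hVV, Matrix.mul_one]

lemma frobSq_sub {m n : Type*} [Fintype m] [Fintype n] (P Q : Matrix m n ℝ) :
    frobSq (P - Q) = frobSq P - 2 * (∑ i, ∑ j, P i j * Q i j) + frobSq Q := by
  unfold frobSq
  rw [Finset.mul_sum, ← Finset.sum_sub_distrib, ← Finset.sum_add_distrib]
  refine Finset.sum_congr rfl fun i _ => ?_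
  rw [Finset.mul_sum, ← Finset.sum_sub_distrib, ← Finset.sum_add_distrib]
  refine Finset.sum_congr rfl fun j _ => ?_
  simp only [Matrix.sub_apply]
  ring

lemma conj_outer {m n p q : Type*} [Fintype m] [Fintype n] [Fintype p] [Fintype q]
    (U : Matrix m p ℝ) (V : Matrix n q ℝ) (c : m → ℝ) (d : n → ℝ) :
    Uᵀ * (Matrix.of fun i j => c i * d j) * V
      = Matrix.of fun k l => (Uᵀ *ᵥ c) k * (Vᵀ *ᵥ d) l := by
  ext k l
  simp only [Matrix.mul_apply, Matrix.of_apply, Matrix.transpose_apply, Matrix.mulVec,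
    dotProduct, Finset.sum_mul, Finset.mul_sum]
  rw [Finset.sum_comm]
  conv_rhs => rw [Finset.sum_comm]
  apply Finset.sum_congr rfl
  intro j _
  apply Finset.sum_congr rfl
  intro i _
  ring

-- extension of a Fin-indexed vector to ℕ
lemma sum_ext {M N : ℕ} (hMN : M ≤ N) (x : Fin M → ℝ) (f : ℝ → ℝ) (hf : f 0 = 0) :
    ∑ i : Fin M, f (x i)
      = ∑ k ∈ Finset.range N, f (if h : k < M then x ⟨k, h⟩ else 0) := by
  have h1 : ∑ i : Fin M, f (x i)
      = ∑ k ∈ Finset.range M, f (if h : k < M then x ⟨k, h⟩ else 0) := by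
    rw [← Fin.sum_univ_eq_sum_range (fun k => f (if h : k < M then x ⟨k, h⟩ else 0)) M]
    refine Finset.sum_congr rfl fun i _ => ?_
    rw [dif_pos i.isLt]
  rw [h1]
  refine Finset.sum_subset (Finset.range_subset_range.mpr hMN) fun k _ hk => ?_
  rw [dif_neg (by simpa using hk), hf]

lemma core (N : ℕ) (hN : 0 < N) (σ X Y : ℕ → ℝ)
    (hσ0 : ∀ k, 0 ≤ σ k) (hσ1 : ∀ k, k ≠ 0 → σ k ≤ σ 1) (hgap : σ 1 < σ 0) :
    0 ≤ σ 0 ^ 2 - 2 * (∑ k ∈ Finset.range N, σ k * (X k * Y k))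
      + (∑ k ∈ Finset.range N, X k ^ 2) * (∑ k ∈ Finset.range N, Y k ^ 2) ∧
    (σ 0 ^ 2 - 2 * (∑ k ∈ Finset.range N, σ k * (X k * Y k))
      + (∑ k ∈ Finset.range N, X k ^ 2) * (∑ k ∈ Finset.range N, Y k ^ 2) = 0 →
      X 0 * Y 0 = σ 0 ∧ ∀ k ∈ Finset.range N, k ≠ 0 → X k = 0 ∧ Y k = 0) := by
  set s := Finset.range N with hs
  have h0s : (0 : ℕ) ∈ s := Finset.mem_range.mpr hN
  set T := ∑ k ∈ s, σ k * (X k * Y k) with hT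
  set a2 := ∑ k ∈ s, X k ^ 2 with ha2def
  set b2 := ∑ k ∈ s, Y k ^ 2 with hb2def
  have hσ0pos : 0 < σ 0 := lt_of_le_of_lt (hσ0 1) hgap
  have hσ0sq : 0 < σ 0 ^ 2 := pow_pos hσ0pos 2
  have ha2 : 0 ≤ a2 := Finset.sum_nonneg fun k _ => sq_nonneg _
  have hb2 : 0 ≤ b2 := Finset.sum_nonneg fun k _ => sq_nonneg _
  have hX0 : X 0 ^ 2 ≤ a2 := Finset.single_le_sum (fun k _ => sq_nonneg (X k)) h0s
  have hY0 : Y 0 ^ 2 ≤ b2 := Finset.single_le_sum (fun k _ => sq_nonneg (Y k)) h0s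
  -- degenerate cases
  by_cases hA0 : a2 = 0
  · have hXz : ∀ k ∈ s, X k = 0 := by
      intro k hk
      have h2 := (Finset.sum_eq_zero_iff_of_nonneg (fun k _ => sq_nonneg (X k))).mp
        (ha2def ▸ hA0) k hk
      exact pow_eq_zero_iff (n := 2) (by norm_num) |>.mp h2
    have hT0 : T = 0 := Finset.sum_eq_zero fun k hk => by rw [hXz k hk]; ring
    clear_value T a2 b2
    constructor
    · rw [hT0, hA0]; linarith
    · intro hD; exfalso; rw [hT0, hA0] at hD; linarith
  by_cases hB0 : b2 = 0
  · have hYz : ∀ k ∈ s, Y k = 0 := by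
      intro k hk
      have h2 := (Finset.sum_eq_zero_iff_of_nonneg (fun k _ => sq_nonneg (Y k))).mp
        (hb2def ▸ hB0) k hk
      exact pow_eq_zero_iff (n := 2) (by norm_num) |>.mp h2
    have hT0 : T = 0 := Finset.sum_eq_zero fun k hk => by rw [hYz k hk]; ring
    clear_value T a2 b2
    constructor
    · rw [hT0, hB0]; linarith
    · intro hD; exfalso; rw [hT0, hB0] at hD; linarith
  -- main case
  have ha2p : 0 < a2 := lt_of_le_of_ne ha2 (Ne.symm hA0)
  have hb2p : 0 < b2 := lt_of_le_of_ne hb2 (Ne.symm hB0)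
  obtain ⟨α, hαp, hα⟩ : ∃ α, 0 < α ∧ α ^ 2 = a2 :=
    ⟨Real.sqrt a2, Real.sqrt_pos.mpr ha2p, Real.sq_sqrt ha2⟩
  obtain ⟨β, hβp, hβ⟩ : ∃ β, 0 < β ∧ β ^ 2 = b2 :=
    ⟨Real.sqrt b2, Real.sqrt_pos.mpr hb2p, Real.sq_sqrt hb2⟩
  have hα0 : α ≠ 0 := ne_of_gt hαp
  have hβ0 : β ≠ 0 := ne_of_gt hβp
  obtain ⟨u, w, hup, hwp, huw, hua, hwb⟩ :
      ∃ u w, 0 < u ∧ 0 < w ∧ u * w = 1 ∧ u * a2 = α * β ∧ w * b2 = α * β :=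
    ⟨β / α, α / β, div_pos hβp hαp, div_pos hαp hβp, by field_simp,
      by rw [← hα]; field_simp, by rw [← hβ]; field_simp⟩
  -- termwise AM-GM
  have hterm : ∀ k ∈ s, 2 * (σ k * (X k * Y k)) ≤ σ k * (u * X k ^ 2 + w * Y k ^ 2) := by
    intro k _
    have h1 : 2 * (X k * Y k) ≤ u * X k ^ 2 + w * Y k ^ 2 := by
      have hnn := mul_nonneg hwp.le (sq_nonneg (u * X k - Y k))
      have hexp : w * (u * X k - Y k) ^ 2
          = u * (u * w) * X k ^ 2 - 2 * (u * w) * (X k * Y k) + w * Y k ^ 2 := by ring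
      rw [huw] at hexp
      linarith [hnn, hexp]
    have h2 := mul_le_mul_of_nonneg_left h1 (hσ0 k)
    have h3 : σ k * (2 * (X k * Y k)) = 2 * (σ k * (X k * Y k)) := by ring
    linarith [h2, h3]
  set P := ∑ k ∈ s, σ k * (u * X k ^ 2 + w * Y k ^ 2) with hPdef
  have h2TP : 2 * T ≤ P := by
    rw [hT, Finset.mul_sum]
    exact Finset.sum_le_sum hterm
  set Q := ∑ k ∈ s.erase 0, σ k * (u * X k ^ 2 + w * Y k ^ 2) with hQdef
  have hPQ : Q + σ 0 * (u * X 0 ^ 2 + w * Y 0 ^ 2) = P :=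
    Finset.sum_erase_add s _ h0s
  set A' := ∑ k ∈ s.erase 0, X k ^ 2 with hA'def
  set B' := ∑ k ∈ s.erase 0, Y k ^ 2 with hB'def
  have hA'a : A' + X 0 ^ 2 = a2 := Finset.sum_erase_add s _ h0s
  have hB'b : B' + Y 0 ^ 2 = b2 := Finset.sum_erase_add s _ h0s
  have hA'nn : 0 ≤ A' := Finset.sum_nonneg fun k _ => sq_nonneg _
  have hB'nn : 0 ≤ B' := Finset.sum_nonneg fun k _ => sq_nonneg _
  have hQle : Q ≤ σ 1 * (u * A' + w * B') := by
    have h1 : Q ≤ ∑ k ∈ s.erase 0, σ 1 * (u * X k ^ 2 + w * Y k ^ 2) := by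
      refine Finset.sum_le_sum fun k hk => ?_
      have hk0 : k ≠ 0 := Finset.ne_of_mem_erase hk
      have hnn : 0 ≤ u * X k ^ 2 + w * Y k ^ 2 := by positivity
      exact mul_le_mul_of_nonneg_right (hσ1 k hk0) hnn
    have h2 : σ 1 * (u * A' + w * B') = ∑ k ∈ s.erase 0, σ 1 * (u * X k ^ 2 + w * Y k ^ 2) := by
      rw [hA'def, hB'def, Finset.mul_sum, Finset.mul_sum, ← Finset.sum_add_distrib,
        Finset.mul_sum]
    linarith
  have t4 : u * A' + u * X 0 ^ 2 = α * β := by rw [← hua, ← hA'a]; ring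
  have t5 : w * B' + w * Y 0 ^ 2 = α * β := by rw [← hwb, ← hB'b]; ring
  have hW1 : u * X 0 ^ 2 ≤ α * β := by linarith [mul_nonneg hup.le hA'nn]
  have hW2 : w * Y 0 ^ 2 ≤ α * β := by linarith [mul_nonneg hwp.le hB'nn]
  have hW0 : 0 ≤ u * X 0 ^ 2 + w * Y 0 ^ 2 := by positivity
  have hab : a2 * b2 = (α * β) ^ 2 := by rw [← hα, ← hβ]; ring
  have hmid : 0 ≤ (σ 0 - σ 1) * (2 * (α * β) - (u * X 0 ^ 2 + w * Y 0 ^ 2)) :=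
    mul_nonneg (by linarith) (by linarith)
  have hQle2 : Q ≤ σ 1 * (2 * (α * β) - (u * X 0 ^ 2 + w * Y 0 ^ 2)) := by
    have h : u * A' + w * B' = 2 * (α * β) - (u * X 0 ^ 2 + w * Y 0 ^ 2) := by linarith
    rwa [h] at hQle
  clear_value T a2 b2 P Q A' B'
  have h2T' : 2 * T ≤ σ 1 * (2 * (α * β) - (u * X 0 ^ 2 + w * Y 0 ^ 2))
      + σ 0 * (u * X 0 ^ 2 + w * Y 0 ^ 2) := by linarith
  have hexp2 : σ 0 ^ 2 - 2 * T + a2 * b2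
      - ((σ 0 - α * β) ^ 2 + (σ 0 - σ 1) * (2 * (α * β) - (u * X 0 ^ 2 + w * Y 0 ^ 2)))
      = (σ 1 * (2 * (α * β) - (u * X 0 ^ 2 + w * Y 0 ^ 2))
          + σ 0 * (u * X 0 ^ 2 + w * Y 0 ^ 2)) - 2 * T + (a2 * b2 - (α * β) ^ 2) := by
    ring
  have hkey : (σ 0 - α * β) ^ 2 + (σ 0 - σ 1) * (2 * (α * β) - (u * X 0 ^ 2 + w * Y 0 ^ 2))
      ≤ σ 0 ^ 2 - 2 * T + a2 * b2 := by linarith [h2T', hab, hexp2]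
  constructor
  · linarith [hkey, sq_nonneg (σ 0 - α * β), hmid]
  · intro hD
    have hsq : (σ 0 - α * β) ^ 2 = 0 :=
      le_antisymm (by linarith [hkey, hmid, hD]) (sq_nonneg _)
    have hmid0 : (σ 0 - σ 1) * (2 * (α * β) - (u * X 0 ^ 2 + w * Y 0 ^ 2)) = 0 :=
      le_antisymm (by linarith [hkey, hD, sq_nonneg (σ 0 - α * β)]) hmid
    have hαβ : α * β = σ 0 := by
      have h := pow_eq_zero_iff (n := 2) (by norm_num) |>.mp hsq
      linarith
    have hW : u * X 0 ^ 2 + w * Y 0 ^ 2 = 2 * (α * β) := by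
      rcases mul_eq_zero.mp hmid0 with h | h
      · linarith
      · linarith
    have huX : u * X 0 ^ 2 = α * β := le_antisymm hW1 (by linarith)
    have hwY : w * Y 0 ^ 2 = α * β := le_antisymm hW2 (by linarith)
    have hA'0 : A' = 0 := by
      have h : u * A' = 0 := by linarith
      exact (mul_eq_zero.mp h).resolve_left (ne_of_gt hup)
    have hB'0 : B' = 0 := by
      have h : w * B' = 0 := by linarith
      exact (mul_eq_zero.mp h).resolve_left (ne_of_gt hwp)
    have hXz : ∀ k ∈ s.erase 0, X k = 0 := by
      intro k hk
      have h2 := (Finset.sum_eq_zero_iff_of_nonneg (fun k _ => sq_nonneg (X k))).mp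
        (hA'def ▸ hA'0) k hk
      exact pow_eq_zero_iff (n := 2) (by norm_num) |>.mp h2
    have hYz : ∀ k ∈ s.erase 0, Y k = 0 := by
      intro k hk
      have h2 := (Finset.sum_eq_zero_iff_of_nonneg (fun k _ => sq_nonneg (Y k))).mp
        (hB'def ▸ hB'0) k hk
      exact pow_eq_zero_iff (n := 2) (by norm_num) |>.mp h2
    have hTval : T = σ 0 * (X 0 * Y 0) := by
      rw [hT, ← Finset.sum_erase_add s _ h0s,
        Finset.sum_eq_zero fun k hk => by rw [hXz k hk]; ring, zero_add]
    have ha2X : a2 = X 0 ^ 2 := by rw [← hA'a, hA'0, zero_add]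
    have hb2Y : b2 = Y 0 ^ 2 := by rw [← hB'b, hB'0, zero_add]
    have hxy : X 0 * Y 0 = σ 0 := by
      rw [hTval, ha2X, hb2Y] at hD
      have e : (σ 0 - X 0 * Y 0) ^ 2 = 0 := by linear_combination hD
      have h := pow_eq_zero_iff (n := 2) (by norm_num) |>.mp e
      linarith
    exact ⟨hxy, fun k hk hk0 => ⟨hXz k (Finset.mem_erase.mpr ⟨hk0, hk⟩),
      hYz k (Finset.mem_erase.mpr ⟨hk0, hk⟩)⟩⟩

/-- If `σ₁ > σ₂`, the best rank-one Frobenius approximation `σ₁ u₁ v₁ᵀ`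
is the unique minimizer of `‖A − B‖` over rank-one `B`. -/
theorem rank_one_frobenius_approx_unique (m n : ℕ)
    (A : Matrix (Fin (m + 1)) (Fin (n + 1)) ℝ)
    (U : Matrix (Fin (m + 1)) (Fin (m + 1)) ℝ)
    (V : Matrix (Fin (n + 1)) (Fin (n + 1)) ℝ)
    (σ : ℕ → ℝ)
    (hU : Uᵀ * U = 1) (hV : Vᵀ * V = 1)
    (hσnonneg : ∀ i, 0 ≤ σ i)
    (hσmono : ∀ i j, i ≤ j → σ j ≤ σ i)
    (hσzero : ∀ i, min (m + 1) (n + 1) ≤ i → σ i = 0)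
    (hgap : σ 1 < σ 0)
    (hA : A = U * (Matrix.of fun (i : Fin (m + 1)) (j : Fin (n + 1)) => if (i : ℕ) = (j : ℕ) then σ i else 0) * Vᵀ)
    (hAne : A ≠ 0)
    (B₁ : Matrix (Fin (m + 1)) (Fin (n + 1)) ℝ)
    (hB₁ : B₁ = Matrix.of fun i j => σ 0 * U i 0 * V j 0) :
    (∀ B : Matrix (Fin (m + 1)) (Fin (n + 1)) ℝ, rankOne B →
      frobSq (A - B₁) ≤ frobSq (A - B)) ∧
    (∀ B : Matrix (Fin (m + 1)) (Fin (n + 1)) ℝ, rankOne B →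
      (∀ B' : Matrix (Fin (m + 1)) (Fin (n + 1)) ℝ, rankOne B' →
        frobSq (A - B) ≤ frobSq (A - B')) → B = B₁) := by
  have hUU : U * Uᵀ = 1 := mul_eq_one_comm.mp hU
  have hVV : V * Vᵀ = 1 := mul_eq_one_comm.mp hV
  have hσ0pos : 0 < σ 0 := lt_of_le_of_lt (hσnonneg 1) hgap
  have hσ1 : ∀ k, k ≠ 0 → σ k ≤ σ 1 := fun k hk => hσmono 1 k (Nat.one_le_iff_ne_zero.mpr hk)
  set S : Matrix (Fin (m + 1)) (Fin (n + 1)) ℝ :=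
    Matrix.of fun (i : Fin (m + 1)) (j : Fin (n + 1)) =>
      if (i : ℕ) = (j : ℕ) then σ i else 0 with hS
  set N := max (m + 1) (n + 1) with hNdef
  have hmN : m + 1 ≤ N := le_max_left _ _
  have hnN : n + 1 ≤ N := le_max_right _ _
  have hNpos : 0 < N := lt_of_lt_of_le (Nat.succ_pos m) hmN
  -- ℕ-extension of coordinate vectors
  set XX : (Fin (m + 1) → ℝ) → ℕ → ℝ :=
    fun c k => if h : k < m + 1 then (Uᵀ *ᵥ c) ⟨k, h⟩ else 0 with hXX
  set YY : (Fin (n + 1) → ℝ) → ℕ → ℝ :=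
    fun d k => if h : k < n + 1 then (Vᵀ *ᵥ d) ⟨k, h⟩ else 0 with hYY
  have hUAV : Uᵀ * A * V = S := by
    rw [hA]
    simp only [Matrix.mul_assoc]
    rw [hV, Matrix.mul_one, ← Matrix.mul_assoc, hU, Matrix.one_mul]
  -- the key distance formula
  have hdist : ∀ (c : Fin (m + 1) → ℝ) (d : Fin (n + 1) → ℝ),
      frobSq (A - Matrix.of fun i j => c i * d j)
        = frobSq S - 2 * (∑ k ∈ Finset.range N, σ k * (XX c k * YY d k))
          + (∑ k ∈ Finset.range N, XX c k ^ 2) * (∑ k ∈ Finset.range N, YY d k ^ 2) := by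
    intro c d
    have h0 : frobSq (A - Matrix.of fun i j => c i * d j)
        = frobSq (Uᵀ * (A - Matrix.of fun i j => c i * d j) * V) :=
      (frobSq_conj U V hU hV _).symm
    rw [h0, Matrix.mul_sub, Matrix.sub_mul, hUAV, conj_outer]
    rw [frobSq_sub]
    congr 1
    · congr 1
      -- inner-product term
      congr 1
      simp only [Matrix.of_apply]
      have hin : ∀ i : Fin (m + 1),
          (∑ j : Fin (n + 1), S i j * ((Uᵀ *ᵥ c) i * (Vᵀ *ᵥ d) j))
            = σ (i : ℕ) * (XX c (i : ℕ) * YY d (i : ℕ)) := by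
        intro i
        by_cases h : (i : ℕ) < n + 1
        · rw [Finset.sum_eq_single (⟨(i : ℕ), h⟩ : Fin (n + 1))]
          · simp [hS, hXX, hYY, i.isLt, h, Nat.le_of_lt_succ h, Nat.le_of_lt_succ i.isLt]
          · intro j _ hj
            have hne : ¬((i : ℕ) = (j : ℕ)) := fun hh => hj (Fin.ext hh.symm)
            simp [hS, hne]
          · intro h'; exact absurd (Finset.mem_univ _) h'
        · have hne : ∀ j : Fin (n + 1), (i : ℕ) ≠ (j : ℕ) := fun j hh => h (hh ▸ j.isLt)
          rw [Finset.sum_eq_zero (fun j _ => by simp [hS, hne j])]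
          have hY0 : YY d (i : ℕ) = 0 := by simp only [hYY]; rw [dif_neg h]
          rw [hY0]; ring
      rw [Finset.sum_congr rfl fun i _ => hin i,
        Fin.sum_univ_eq_sum_range (fun k => σ k * (XX c k * YY d k)) (m + 1)]
      refine Finset.sum_subset (Finset.range_subset_range.mpr hmN) fun k _ hk => ?_
      have hx0 : XX c k = 0 := by simp only [hXX]; rw [dif_neg (by simpa using hk)]
      rw [hx0]; ring
    · -- frobSq of outer product
      have h1 : frobSq (Matrix.of fun k l => (Uᵀ *ᵥ c) k * (Vᵀ *ᵥ d) l)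
          = (∑ i, (Uᵀ *ᵥ c) i ^ 2) * (∑ j, (Vᵀ *ᵥ d) j ^ 2) := by
        unfold frobSq
        rw [Finset.sum_mul_sum]
        refine Finset.sum_congr rfl fun i _ => Finset.sum_congr rfl fun j _ => ?_
        simp only [Matrix.of_apply]
        ring
      rw [h1]
      simp only [hXX, hYY]
      congr 1
      · exact sum_ext hmN (Uᵀ *ᵥ c) (fun t => t ^ 2) (by norm_num)
      · exact sum_ext hnN (Vᵀ *ᵥ d) (fun t => t ^ 2) (by norm_num)
  -- the optimal pair
  set c₁ : Fin (m + 1) → ℝ := fun i => σ 0 * U i 0 with hc₁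
  set d₁ : Fin (n + 1) → ℝ := fun j => V j 0 with hd₁
  have hB₁' : B₁ = Matrix.of fun i j => c₁ i * d₁ j := by rw [hB₁]
  have hx₁ : ∀ k, (Uᵀ *ᵥ c₁) k = if k = 0 then σ 0 else 0 := by
    intro k
    have h1 : (Uᵀ *ᵥ c₁) k = σ 0 * (Uᵀ * U) k 0 := by
      simp only [Matrix.mulVec, dotProduct, Matrix.mul_apply, Matrix.transpose_apply,
        Finset.mul_sum, hc₁]
      exact Finset.sum_congr rfl fun i _ => by ring
    rw [h1, hU, Matrix.one_apply]
    split <;> simp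
  have hy₁ : ∀ k, (Vᵀ *ᵥ d₁) k = if k = 0 then 1 else 0 := by
    intro k
    have h1 : (Vᵀ *ᵥ d₁) k = (Vᵀ * V) k 0 := by
      simp only [Matrix.mulVec, dotProduct, Matrix.mul_apply, Matrix.transpose_apply,
        hd₁]
    rw [h1, hV, Matrix.one_apply]
  have hXX₁ : ∀ k, XX c₁ k = if k = 0 then σ 0 else 0 := by
    intro k
    by_cases h : k < m + 1
    · simp only [hXX]
      rw [dif_pos h, hx₁]
      simp [Fin.ext_iff]
    · simp only [hXX]
      rw [dif_neg h, if_neg (by omega)]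
  have hYY₁ : ∀ k, YY d₁ k = if k = 0 then 1 else 0 := by
    intro k
    by_cases h : k < n + 1
    · simp only [hYY]
      rw [dif_pos h, hy₁]
      simp [Fin.ext_iff]
    · simp only [hYY]
      rw [dif_neg h, if_neg (by omega)]
  have h0N : (0 : ℕ) ∈ Finset.range N := Finset.mem_range.mpr hNpos
  have hsum1 : (∑ k ∈ Finset.range N, σ k * (XX c₁ k * YY d₁ k)) = σ 0 * σ 0 := by
    rw [Finset.sum_eq_single 0]
    · rw [hXX₁ 0, hYY₁ 0]; simp
    · intro k _ hk; rw [hXX₁ k, if_neg hk]; ring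
    · intro h; exact absurd h0N h
  have hsum2 : (∑ k ∈ Finset.range N, XX c₁ k ^ 2) = σ 0 ^ 2 := by
    rw [Finset.sum_eq_single 0]
    · rw [hXX₁ 0]; simp
    · intro k _ hk; rw [hXX₁ k, if_neg hk]; ring
    · intro h; exact absurd h0N h
  have hsum3 : (∑ k ∈ Finset.range N, YY d₁ k ^ 2) = 1 := by
    rw [Finset.sum_eq_single 0]
    · rw [hYY₁ 0]; simp
    · intro k _ hk; rw [hYY₁ k, if_neg hk]; ring
    · intro h; exact absurd h0N h
  have hdistB₁ : frobSq (A - B₁) = frobSq S - σ 0 ^ 2 := by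
    rw [hB₁', hdist c₁ d₁, hsum1, hsum2, hsum3]; ring
  -- part 1
  have part1 : ∀ B : Matrix (Fin (m + 1)) (Fin (n + 1)) ℝ, rankOne B →
      frobSq (A - B₁) ≤ frobSq (A - B) := by
    intro B hB
    obtain ⟨hBne, c, d, hBcd⟩ := hB
    rw [hBcd, hdist c d, hdistB₁]
    have hcore := (core N hNpos σ (XX c) (YY d) hσnonneg hσ1 hgap).1
    linarith
  refine ⟨part1, ?_⟩
  -- part 2 : uniqueness
  intro B hB hmin
  obtain ⟨hBne, c, d, hBcd⟩ := hB
  -- B₁ is rank one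
  have hU0 : ∃ i, U i 0 ≠ 0 := by
    by_contra h
    push_neg at h
    have h1 : (1 : Matrix (Fin (m + 1)) (Fin (m + 1)) ℝ) 0 0 = 0 := by
      rw [← hU]
      simp only [Matrix.mul_apply, Matrix.transpose_apply]
      exact Finset.sum_eq_zero fun i _ => by rw [h i]; ring
    simp [Matrix.one_apply] at h1
  have hV0 : ∃ j, V j 0 ≠ 0 := by
    by_contra h
    push_neg at h
    have h1 : (1 : Matrix (Fin (n + 1)) (Fin (n + 1)) ℝ) 0 0 = 0 := by
      rw [← hV]
      simp only [Matrix.mul_apply, Matrix.transpose_apply]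
      exact Finset.sum_eq_zero fun j _ => by rw [h j]; ring
    simp [Matrix.one_apply] at h1
  obtain ⟨i0, hi0⟩ := hU0
  obtain ⟨j0, hj0⟩ := hV0
  have hB₁ne : B₁ ≠ 0 := by
    intro hzero
    have hz : B₁ i0 j0 = 0 := by rw [hzero]; rfl
    rw [hB₁] at hz
    simp only [Matrix.of_apply] at hz
    exact (mul_ne_zero (mul_ne_zero (ne_of_gt hσ0pos) hi0) hj0) hz
  have hrk₁ : rankOne B₁ := ⟨hB₁ne, c₁, d₁, hB₁'⟩
  have hle := hmin B₁ hrk₁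
  have hge := part1 B ⟨hBne, c, d, hBcd⟩
  have heq : frobSq (A - B) = frobSq (A - B₁) := le_antisymm hle hge
  rw [hBcd, hdist c d, hdistB₁] at heq
  have hD : σ 0 ^ 2 - 2 * (∑ k ∈ Finset.range N, σ k * (XX c k * YY d k))
      + (∑ k ∈ Finset.range N, XX c k ^ 2) * (∑ k ∈ Finset.range N, YY d k ^ 2) = 0 := by
    linarith
  obtain ⟨hxy, hz⟩ := (core N hNpos σ (XX c) (YY d) hσnonneg hσ1 hgap).2 hD
  -- extract structure
  have hc : c = U *ᵥ (Uᵀ *ᵥ c) := by rw [Matrix.mulVec_mulVec, hUU, Matrix.one_mulVec]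
  have hd : d = V *ᵥ (Vᵀ *ᵥ d) := by rw [Matrix.mulVec_mulVec, hVV, Matrix.one_mulVec]
  have hxk : ∀ k : Fin (m + 1), k ≠ 0 → (Uᵀ *ᵥ c) k = 0 := by
    intro k hk
    have hkN : (k : ℕ) ∈ Finset.range N := Finset.mem_range.mpr (lt_of_lt_of_le k.isLt hmN)
    have hk0 : (k : ℕ) ≠ 0 := fun hh => hk (Fin.ext (by simp [hh]))
    have h1 := (hz (k : ℕ) hkN hk0).1
    simp only [hXX] at h1
    rw [dif_pos k.isLt] at h1
    simpa using h1
  have hyk : ∀ k : Fin (n + 1), k ≠ 0 → (Vᵀ *ᵥ d) k = 0 := by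
    intro k hk
    have hkN : (k : ℕ) ∈ Finset.range N := Finset.mem_range.mpr (lt_of_lt_of_le k.isLt hnN)
    have hk0 : (k : ℕ) ≠ 0 := fun hh => hk (Fin.ext (by simp [hh]))
    have h1 := (hz (k : ℕ) hkN hk0).2
    simp only [hYY] at h1
    rw [dif_pos k.isLt] at h1
    simpa using h1
  have hσval : (Uᵀ *ᵥ c) 0 * (Vᵀ *ᵥ d) 0 = σ 0 := by
    have hx0 : XX c 0 = (Uᵀ *ᵥ c) 0 := by simp [hXX]
    have hy0 : YY d 0 = (Vᵀ *ᵥ d) 0 := by simp [hYY]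
    rw [← hx0, ← hy0]
    exact hxy
  -- conclude B = B₁ entrywise
  set x := Uᵀ *ᵥ c with hxdef
  set y := Vᵀ *ᵥ d with hydef
  ext i j
  rw [hBcd, hB₁]
  simp only [Matrix.of_apply]
  have hci : c i = U i 0 * x 0 := by
    conv_lhs => rw [hc]
    simp only [Matrix.mulVec, dotProduct]
    rw [Finset.sum_eq_single (0 : Fin (m + 1))]
    · intro b _ hb; rw [hxk b hb]; ring
    · intro h'; exact absurd (Finset.mem_univ _) h'
  have hdj : d j = V j 0 * y 0 := by
    conv_lhs => rw [hd]
    simp only [Matrix.mulVec, dotProduct]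
    rw [Finset.sum_eq_single (0 : Fin (n + 1))]
    · intro b _ hb; rw [hyk b hb]; ring
    · intro h'; exact absurd (Finset.mem_univ _) h'
  rw [hci, hdj, ← hσval]
  ring
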